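/- There is no infinite sequence of σ-comparisons between countably complete filters on complete Boolean algebras: one cannot have ⋯ → (F_2, ἀ_2) → (F_1, ἀ_1) → (F_0, ἀ_0) where each h_{n+1,n} : (F_{n+1}, ἀ_{n+1}) → (F_n, ἀ_n) is a σ-comparison. -/

import Mathlib

/-- A σ-map between complete Boolean algebras preserves `⊥`, `⊤`, and countable meets. -/
def SigmaMap {β : Type u} {γ : Type v} [CompleteBooleanAlgebra β] [CompleteBooleanAlgebra γ]
    (h : β → γ) : Prop :=
  h ⊥ = ⊥ ∧ h ⊤ = ⊤ ∧ ∀ f : ℕ → β, h (⨅ n, f n) = ⨅ n, h (f n)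

/-- A countably complete (proper) filter on a complete Boolean algebra. -/
def IsCCFilter {β : Type u} [CompleteBooleanAlgebra β] (F : Set β) : Prop :=
  ⊤ ∈ F ∧ ⊥ ∉ F ∧ (∀ a b : β, a ∈ F → a ≤ b → b ∈ F) ∧
    ∀ g : ℕ → β, (∀ n, g n ∈ F) → (⨅ n, g n) ∈ F

/-!
Thread the comparisons together: `r n`, the meet of all comparison values `⟦ἀ_{m+1} < ἀ_m⟧`
(`m ≥ n`) pulled down to level `n` through the `h`'s, lies in `F n` by countable completeness,
and satisfies `r n ≤ ⟦ἀ_{n+1} < ἀ_n⟧` and `r n ≤ h n (r (n + 1))`. Below `r n`, the statement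
`ἀ_n = γ` therefore forces, through `h n`, `ἀ_{n+1} < γ` below `r (n + 1)`. By induction on `γ`,
`⟦ἀ_n = γ⟧ ⊓ r n = ⊥` for all `n` and `γ`, so `r 0 = ⊥`, contradicting `r 0 ∈ F 0`.
-/

universe u v w

theorem iInf_ite_zero_eq_inf {α : Type*} [CompleteLattice α] (a b : α) :
    (⨅ k : ℕ, if k = 0 then a else b) = a ⊓ b := by
  refine le_antisymm (le_inf (iInf_le_of_le 0 (by simp)) (iInf_le_of_le 1 (by simp)))
    (le_iInf fun k => ?_)
  split_ifs
  exacts [inf_le_left, inf_le_right]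

theorem SigmaMap.map_inf {α : Type u} {β : Type v} [CompleteBooleanAlgebra α]
    [CompleteBooleanAlgebra β] {h : α → β} (hh : SigmaMap h) (a b : α) :
    h (a ⊓ b) = h a ⊓ h b := by
  have := hh.2.2 fun k => if k = 0 then a else b
  simpa only [iInf_ite_zero_eq_inf, apply_ite h] using this

/-- `⟦ἀ < β⟧` for the Boolean-valued ordinal `ἀ` given by the partition `⟦ἀ = γ⟧ = e γ`. -/
def ordLtVal {α : Type u} [CompleteLattice α] (e : Ordinal.{v} → α) (β : Ordinal.{v}) : α :=
  ⨆ γ < β, e γ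

theorem ordLtVal_inf_eq_bot {α : Type u} [CompleteBooleanAlgebra α] {e : Ordinal.{v} → α}
    {β : Ordinal.{v}} {a : α} : ordLtVal e β ⊓ a = ⊥ ↔ ∀ γ < β, e γ ⊓ a = ⊥ := by
  simp only [ordLtVal, iSup_inf_eq, iSup_eq_bot]

/-- The comparison value `⟦ἀ₀ < ἀ₁⟧_h`. -/
def comparisonVal {α : Type u} {β : Type w} [CompleteLattice α] [CompleteLattice β]
    (h : α → β) (e₀ : Ordinal.{v} → α) (e₁ : Ordinal.{v} → β) : β :=
  ⨆ γ, h (ordLtVal e₀ γ) ⊓ e₁ γ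

theorem inf_comparisonVal_le {α : Type u} {β : Type w} [CompleteLattice α]
    [CompleteBooleanAlgebra β] (h : α → β) (e₀ : Ordinal.{v} → α) {e₁ : Ordinal.{v} → β}
    (hdisj : ∀ γ δ, γ ≠ δ → e₁ γ ⊓ e₁ δ = ⊥) (γ : Ordinal.{v}) :
    e₁ γ ⊓ comparisonVal h e₀ e₁ ≤ h (ordLtVal e₀ γ) := by
  rw [comparisonVal, inf_iSup_eq]
  refine iSup_le fun δ => ?_
  rcases eq_or_ne γ δ with rfl | hne
  · exact inf_le_right.trans inf_le_left
  · calc e₁ γ ⊓ (h (ordLtVal e₀ δ) ⊓ e₁ δ) ≤ e₁ γ ⊓ e₁ δ := inf_le_inf_left _ inf_le_right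
      _ = ⊥ := hdisj γ δ hne
      _ ≤ _ := bot_le

section Thread

variable {B : ℕ → Type u} [∀ n, CompleteBooleanAlgebra (B n)] (h : ∀ n, B (n + 1) → B n)
  (c : ∀ n, B n)

/-- `pullDown h c k n = h n (h (n + 1) (⋯ (h (n + k - 1) (c (n + k)))))`. -/
def pullDown : ℕ → ∀ n, B n
  | 0 => c
  | k + 1 => fun n => h n (pullDown k (n + 1))

def threadInf (n : ℕ) : B n :=
  ⨅ k, pullDown h c k n

theorem threadInf_le (n : ℕ) : threadInf h c n ≤ c n :=
  iInf_le (fun k => pullDown h c k n) 0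

theorem threadInf_le_map {n : ℕ} (hσ : SigmaMap (h n)) :
    threadInf h c n ≤ h n (threadInf h c (n + 1)) := by
  unfold threadInf
  rw [hσ.2.2]
  exact le_iInf fun k => iInf_le (fun j => pullDown h c j n) (k + 1)

theorem threadInf_mem {F : ∀ n, Set (B n)} (hF : ∀ n, IsCCFilter (F n))
    (hred : ∀ n a, a ∈ F (n + 1) → h n a ∈ F n) (hc : ∀ n, c n ∈ F n) (n : ℕ) :
    threadInf h c n ∈ F n := by
  have hpull : ∀ k n, pullDown h c k n ∈ F n := by
    intro k
    induction k with
    | zero => exact hc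
    | succ k ih => exact fun n => hred n _ (ih (n + 1))
  exact (hF n).2.2.2 _ fun k => hpull k n

end Thread

theorem eq_bot_of_inf_le_map_ordLtVal {B : ℕ → Type u} [∀ n, CompleteBooleanAlgebra (B n)]
    (h : ∀ n, B (n + 1) → B n) (hbot : ∀ n, h n ⊥ = ⊥) (e : ∀ n, Ordinal.{v} → B n)
    (hpart : ⨆ γ, e 0 γ = ⊤) (r : ∀ n, B n)
    (hstep : ∀ n γ, e n γ ⊓ r n ≤ h n (ordLtVal (e (n + 1)) γ ⊓ r (n + 1))) :
    r 0 = ⊥ := by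
  have hzero : ∀ γ n, e n γ ⊓ r n = ⊥ := by
    intro γ
    induction γ using WellFoundedLT.induction with
    | _ γ ih =>
      intro n
      have hlt : ordLtVal (e (n + 1)) γ ⊓ r (n + 1) = ⊥ :=
        ordLtVal_inf_eq_bot.2 fun δ hδ => ih δ hδ (n + 1)
      exact le_bot_iff.1 (hbot n ▸ hlt ▸ hstep n γ)
  rw [← top_inf_eq (r 0), ← hpart, iSup_inf_eq]
  exact iSup_eq_bot.2 fun γ => hzero γ 0

/-- There is no infinite sequence of σ-comparisons
`⋯ → (F₂, ἀ₂) → (F₁, ἀ₁) → (F₀, ἀ₀)` between countably complete filters on complete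
Boolean algebras: each `h n : B (n+1) → B n` is a σ-map carrying `F (n+1)` into `F n`
with `⟦ἀ_{n+1} < ἀ_n⟧_{h n} ∈ F n`. -/
theorem stmt9 (B : ℕ → Type u) [∀ n, CompleteBooleanAlgebra (B n)]
    (F : ∀ n, Set (B n)) (hF : ∀ n, IsCCFilter (F n))
    (e : ∀ n : ℕ, Ordinal.{v} → B n)
    (hdisj : ∀ (n : ℕ) (β γ : Ordinal.{v}), β ≠ γ → e n β ⊓ e n γ = ⊥)
    (hpart : ∀ n : ℕ, (⨆ β : Ordinal.{v}, e n β) = ⊤)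
    (h : ∀ n : ℕ, B (n + 1) → B n) (hσ : ∀ n, SigmaMap (h n))
    (hred : ∀ (n : ℕ) (a : B (n + 1)), a ∈ F (n + 1) → h n a ∈ F n)
    (hcmp : ∀ n : ℕ,
      (⨆ β : Ordinal.{v},
        h n (⨆ γ : Ordinal.{v}, ⨆ _ : γ < β, e (n + 1) γ) ⊓ e n β) ∈ F n) :
    False := by
  set c : ∀ n, B n := fun n => comparisonVal (h n) (e (n + 1)) (e n)
  set r := threadInf h c
  have hstep (n : ℕ) (γ : Ordinal.{v}) :
      e n γ ⊓ r n ≤ h n (ordLtVal (e (n + 1)) γ ⊓ r (n + 1)) :=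
    calc e n γ ⊓ r n ≤ e n γ ⊓ (c n ⊓ h n (r (n + 1))) :=
          inf_le_inf_left _ (le_inf (threadInf_le h c n) (threadInf_le_map h c (hσ n)))
      _ ≤ h n (ordLtVal (e (n + 1)) γ) ⊓ h n (r (n + 1)) := by
          rw [← inf_assoc]
          exact inf_le_inf_right _ (inf_comparisonVal_le _ _ (hdisj n) γ)
      _ = h n (ordLtVal (e (n + 1)) γ ⊓ r (n + 1)) := ((hσ n).map_inf _ _).symm
  have hr0 : r 0 = ⊥ :=
    eq_bot_of_inf_le_map_ordLtVal h (fun n => (hσ n).1) e (hpart 0) r hstep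
  exact (hF 0).2.1 (hr0 ▸ threadInf_mem h c hF hred hcmp 0)
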